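/- arXiv:2506.06194 — 5 statements merged into one kernel-verified Lean document; each statement's English description precedes it below -/
import Mathlib

section
/- Let D ≥ 1, let λ : ℝ → ℝ be continuous, let F : ℝ^D → ℝ^D be continuous, and let h : ℝ × ℝ^D → ℝ be continuously differentiable. Assume: (i) for all (t, θ) ∈ ℝ × ℝ^D, ∂_t h(t, θ) = λ(t) ⟨∇_θ h(t, θ), θ⟩ (h is conserved through the pure weight-decay flow θ' = −λ(t)θ, which in the paper follows from the existence, for each θ, of a dataset with vanishing loss gradient); and (ii) for all (t, θ) ∈ ℝ × ℝ^D, ∂_t h(t, θ) = ⟨∇_θ h(t, θ), F(θ) + λ(t) θ⟩ (h is conserved through the regularized flow θ' = −F(θ) − λ(t)θ). Define H : ℝ^D → ℝ by H(a) := h(0, a). Then: (a) h(t, θ) = H(θ · exp(∫₀ᵗ λ(s) ds)) for all (t, θ); and (b) ⟨∇H(θ), F(θ)⟩ = 0 for all θ ∈ ℝ^D, i.e., the time-independent function (t, θ) ↦ H(θ) is conserved through the unregularized flow θ' = −F(θ). -/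
/-!
Subtracting the two conservation identities shows that the `θ`-derivative of `h` vanishes in
the direction `F θ`; at `t = 0` this is (b). For (a), the first identity says that `h` is
constant along the weight-decay trajectories `u ↦ (u, exp (Λ t - Λ u) • θ)`, where `Λ` is an
antiderivative of `λ`; comparing the values at `u = t` and `u = 0` gives the formula.
-/

section

variable {E : Type*} [NormedAddCommGroup E] [NormedSpace ℝ E]

lemma ContinuousLinearMap.apply_zero_prodMk_eq_zero_of_apply_one_zero_eq
    (L : ℝ × E →L[ℝ] ℝ) (c : ℝ) (θ v : E)
    (hdecay : L (1, 0) = c * L (0, θ)) (hflow : L (1, 0) = L (0, v + c • θ)) :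
    L (0, v) = 0 := by
  have hsplit : ((0 : ℝ), v + c • θ) = ((0 : ℝ), v) + c • ((0 : ℝ), θ) := by simp
  rw [hsplit, map_add, map_smul, smul_eq_mul] at hflow
  linarith

lemma fderiv_comp_prodMk_right_apply {h : ℝ × E → ℝ} {t : ℝ} {θ : E}
    (hd : DifferentiableAt ℝ h (t, θ)) (v : E) :
    fderiv ℝ (fun a => h (t, a)) θ v = fderiv ℝ h (t, θ) (0, v) := by
  have hcomp : HasFDerivAt (fun a => h (t, a))
      ((fderiv ℝ h (t, θ)).comp (ContinuousLinearMap.inr ℝ ℝ E)) θ :=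
    hd.hasFDerivAt.comp θ (hasFDerivAt_prodMk_right t θ)
  rw [hcomp.fderiv]
  rfl

lemma eq_exp_smul_of_weightDecay_conserved {h : ℝ × E → ℝ} (hd : Differentiable ℝ h)
    {lam Λ : ℝ → ℝ} (hΛ : ∀ u, HasDerivAt Λ (lam u) u)
    (hdecay : ∀ t θ, fderiv ℝ h (t, θ) (1, 0) = lam t * fderiv ℝ h (t, θ) (0, θ))
    (t s : ℝ) (θ : E) :
    h (t, θ) = h (s, Real.exp (Λ t - Λ s) • θ) := by
  set g : ℝ → ℝ := fun u => h (u, Real.exp (Λ t - Λ u) • θ)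
  have hg : ∀ u, HasDerivAt g 0 u := by
    intro u
    set c := Real.exp (Λ t - Λ u)
    have hcurve : HasDerivAt (fun v => (v, Real.exp (Λ t - Λ v) • θ))
        ((1 : ℝ), (c * -lam u) • θ) u :=
      (hasDerivAt_id u).prodMk ((((hΛ u).const_sub (Λ t)).exp).smul_const θ)
    have hvel : ((1 : ℝ), (c * -lam u) • θ)
        = ((1 : ℝ), (0 : E)) + (-lam u) • ((0 : ℝ), c • θ) := by
      simp [smul_smul, mul_comm]
    have hzero : fderiv ℝ h (u, c • θ) ((1 : ℝ), (c * -lam u) • θ) = 0 := by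
      rw [hvel, map_add, map_smul, smul_eq_mul, hdecay]
      ring
    have hcomp := (hd _).hasFDerivAt.comp_hasDerivAt u hcurve
    rwa [hzero] at hcomp
  have hconst : g t = g s :=
    is_const_of_deriv_eq_zero (fun u => (hg u).differentiableAt) (fun u => (hg u).deriv) t s
  simpa [g] using hconst

end

theorem structure_theorem_weight_decay_general
    (D : ℕ) (lam : ℝ → ℝ) (hlam : Continuous lam)
    (F : EuclideanSpace ℝ (Fin D) → EuclideanSpace ℝ (Fin D))
    (h : ℝ × EuclideanSpace ℝ (Fin D) → ℝ) (hh : ContDiff ℝ 1 h)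
    (h1 : ∀ (t : ℝ) (θ : EuclideanSpace ℝ (Fin D)),
      fderiv ℝ h (t, θ) (1, 0) = lam t * fderiv ℝ h (t, θ) (0, θ))
    (h2 : ∀ (t : ℝ) (θ : EuclideanSpace ℝ (Fin D)),
      fderiv ℝ h (t, θ) (1, 0) = fderiv ℝ h (t, θ) (0, F θ + lam t • θ)) :
    (∀ (t : ℝ) (θ : EuclideanSpace ℝ (Fin D)),
      h (t, θ) = h (0, Real.exp (∫ s in (0:ℝ)..t, lam s) • θ)) ∧
    (∀ θ : EuclideanSpace ℝ (Fin D),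
      fderiv ℝ (fun a => h (0, a)) θ (F θ) = 0) := by
  have hd : Differentiable ℝ h := hh.differentiable one_ne_zero
  constructor
  · intro t θ
    have hΛ : ∀ u, HasDerivAt (fun v => ∫ s in (0:ℝ)..v, lam s) (lam u) u :=
      fun u => (hlam.integral_hasStrictDerivAt 0 u).hasDerivAt
    simpa using eq_exp_smul_of_weightDecay_conserved hd hΛ h1 t 0 θ
  · intro θ
    rw [fderiv_comp_prodMk_right_apply (hd _)]
    exact (fderiv ℝ h (0, θ)).apply_zero_prodMk_eq_zero_of_apply_one_zero_eq (lam 0) θ (F θ)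
      (h1 0 θ) (h2 0 θ)

/-- **Structure theorem** for conservation laws of gradient flows with weight decay.
If a `C¹` function `h (t, θ)` is conserved both through the pure weight-decay flow
`θ' = -λ(t) θ` (hypothesis `h1`) and through the regularized flow `θ' = -F(θ) - λ(t) θ`
(hypothesis `h2`), then (a) `h (t, θ) = H (exp (∫₀ᵗ λ) • θ)` where `H a := h (0, a)`,
and (b) the time-independent function `H` is conserved through the unregularized flow
`θ' = -F(θ)`, i.e. `⟨∇H(θ), F(θ)⟩ = 0`. -/
theorem structure_theorem_weight_decay
    (D : ℕ) (hD : 1 ≤ D) (lam : ℝ → ℝ) (hlam : Continuous lam)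
    (F : EuclideanSpace ℝ (Fin D) → EuclideanSpace ℝ (Fin D)) (hF : Continuous F)
    (h : ℝ × EuclideanSpace ℝ (Fin D) → ℝ) (hh : ContDiff ℝ 1 h)
    (h1 : ∀ (t : ℝ) (θ : EuclideanSpace ℝ (Fin D)),
      fderiv ℝ h (t, θ) (1, 0) = lam t * fderiv ℝ h (t, θ) (0, θ))
    (h2 : ∀ (t : ℝ) (θ : EuclideanSpace ℝ (Fin D)),
      fderiv ℝ h (t, θ) (1, 0) = fderiv ℝ h (t, θ) (0, F θ + lam t • θ)) :
    (∀ (t : ℝ) (θ : EuclideanSpace ℝ (Fin D)),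
      h (t, θ) = h (0, Real.exp (∫ s in (0:ℝ)..t, lam s) • θ)) ∧
    (∀ θ : EuclideanSpace ℝ (Fin D),
      fderiv ℝ (fun a => h (0, a)) θ (F θ) = 0) :=
  structure_theorem_weight_decay_general D lam hlam F h hh h1 h2
end

section
/- Fix integers H ≥ 1, d ≥ 1, dim ≥ 1. Let G : (ℝ^{dim×dim} × ℝ^{dim×dim})^H → ℝ be differentiable and define L on parameters θ = (Q_h, K_h, V_h, O_h)_{h=1}^H ∈ ((ℝ^{d×dim})⁴)^H by L(θ) = G((Q_hᵀ K_h, V_hᵀ O_h)_{h=1}^H). (Any empirical loss of the multi-head attention network g(θ, X) = Σ_{h=1}^H softmax(X Q_hᵀ K_h Xᵀ) X V_hᵀ O_h is of this form, since the network depends on the parameters only through the products Q_hᵀK_h and V_hᵀO_h.) Then along any gradient-flow trajectory θ(t) of L, for each h ∈ {1, …, H} the matrices Q_h(t) Q_h(t)ᵀ − K_h(t) K_h(t)ᵀ and V_h(t) V_h(t)ᵀ − O_h(t) O_h(t)ᵀ are constant in t. -/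
open scoped Matrix

/-- The `Q` (resp. `K`, `V`, `O`, according to `c ∈ Fin 4`) matrix of the `h`-th head,
extracted from the multi-head attention parameter vector `θ`. -/
noncomputable def headMatrix (H d dim : ℕ)
    (θ : EuclideanSpace ℝ (Fin H × Fin 4 × Fin d × Fin dim)) (h : Fin H) (c : Fin 4) :
    Matrix (Fin d) (Fin dim) ℝ :=
  Matrix.of fun i j => θ (h, c, i, j)

/-- The reparameterization `θ = (Q_h, K_h, V_h, O_h)_h ↦ (Q_hᵀ K_h, V_hᵀ O_h)_h`,
through which any loss of the multi-head attention network factors. -/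
noncomputable def headReparam (H d dim : ℕ)
    (θ : EuclideanSpace ℝ (Fin H × Fin 4 × Fin d × Fin dim)) :
    EuclideanSpace ℝ (Fin H × Fin 2 × Fin dim × Fin dim) :=
  (EuclideanSpace.equiv (Fin H × Fin 2 × Fin dim × Fin dim) ℝ).symm fun p =>
    if p.2.1 = 0 then
      ((headMatrix H d dim θ p.1 0)ᵀ * headMatrix H d dim θ p.1 1) p.2.2.1 p.2.2.2
    else
      ((headMatrix H d dim θ p.1 2)ᵀ * headMatrix H d dim θ p.1 3) p.2.2.1 p.2.2.2

/-!
The products `Q_hᵀ K_h` are invariant under `(Q_h, K_h) ↦ (P Q_h, P⁻ᵀ K_h)` for `P ∈ GL(d)`,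
so the gradient of `L` is orthogonal to the infinitesimal generators `(X Q_h, -Xᵀ K_h)` of this
action. Written out, this orthogonality says `Q_h (∇_Q L)ᵀ = (∇_K L) K_hᵀ` (and likewise for
`V_h`, `O_h`), and along the flow `θ' = -∇L` it makes the derivative of `Q_h Q_hᵀ - K_h K_hᵀ`
vanish.
-/

open scoped InnerProductSpace

theorem Convex.eq_of_forall_hasDerivAt_zero {E : Type*} [NormedAddCommGroup E]
    [NormedSpace ℝ E] {s : Set ℝ} (hs : Convex ℝ s) {f : ℝ → E}
    (hf : ∀ t ∈ s, HasDerivAt f 0 t) {x y : ℝ} (hx : x ∈ s) (hy : y ∈ s) : f x = f y := by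
  have := hs.norm_image_sub_le_of_norm_hasDerivWithin_le (C := 0)
    (fun t ht => (hf t ht).hasDerivWithinAt) (fun _ _ => by simp) hx hy
  rw [zero_mul, norm_le_zero_iff, sub_eq_zero] at this
  exact this.symm

theorem fderiv_comp_apply_eq_zero_of_hasDerivAt_line_zero {E F K : Type*}
    [NormedAddCommGroup E] [NormedSpace ℝ E] [NormedAddCommGroup F] [NormedSpace ℝ F]
    [NormedAddCommGroup K] [NormedSpace ℝ K] {G : F → K} {φ : E → F} {x v : E}
    (hG : DifferentiableAt ℝ G (φ x)) (hφ : HasDerivAt (fun s : ℝ => φ (x + s • v)) 0 0) :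
    fderiv ℝ (G ∘ φ) x v = 0 := by
  by_cases hL : DifferentiableAt ℝ (G ∘ φ) x
  · have hline : HasDerivAt (fun s : ℝ => x + s • v) v 0 := by
      simpa using ((hasDerivAt_id (0 : ℝ)).smul_const v).const_add x
    have h1 : HasDerivAt (fun s : ℝ => (G ∘ φ) (x + s • v)) (fderiv ℝ (G ∘ φ) x v) 0 :=
      hL.hasFDerivAt.comp_hasDerivAt_of_eq (0 : ℝ) hline (by simp)
    have h2 : HasDerivAt (fun s : ℝ => G (φ (x + s • v))) (fderiv ℝ G (φ x) 0) 0 :=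
      hG.hasFDerivAt.comp_hasDerivAt_of_eq (0 : ℝ) hφ (by simp)
    simpa using h1.unique h2
  · simp [fderiv_zero_of_not_differentiableAt hL]

theorem Matrix.hasDerivAt_mul_transpose_apply {m n : Type*} [Fintype n]
    {A B : ℝ → Matrix m n ℝ} {A' B' : Matrix m n ℝ} {t : ℝ}
    (hA : ∀ i j, HasDerivAt (fun t => A t i j) (A' i j) t)
    (hB : ∀ i j, HasDerivAt (fun t => B t i j) (B' i j) t) (a b : m) :
    HasDerivAt (fun t => (A t * (B t)ᵀ) a b) ((A' * (B t)ᵀ + A t * B'ᵀ) a b) t := by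
  simp only [Matrix.add_apply, Matrix.mul_apply, Matrix.transpose_apply, ← Finset.sum_add_distrib]
  exact HasDerivAt.fun_sum fun j _ => (hA a j).mul (hB b j)

theorem Matrix.hasDerivAt_mul_transpose_sub_apply {m n : Type*} [Fintype n]
    {A B : ℝ → Matrix m n ℝ} {GA GB : Matrix m n ℝ} {t : ℝ}
    (hA : ∀ i j, HasDerivAt (fun t => A t i j) (-GA i j) t)
    (hB : ∀ i j, HasDerivAt (fun t => B t i j) (-GB i j) t)
    (hbal : A t * GAᵀ = GB * (B t)ᵀ) (a b : m) :
    HasDerivAt (fun t => (A t * (A t)ᵀ - B t * (B t)ᵀ) a b) 0 t := by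
  have hAA : HasDerivAt (fun t => (A t * (A t)ᵀ) a b) ((-GA * (A t)ᵀ + A t * (-GA)ᵀ) a b) t :=
    Matrix.hasDerivAt_mul_transpose_apply hA hA a b
  have hBB : HasDerivAt (fun t => (B t * (B t)ᵀ) a b) ((-GB * (B t)ᵀ + B t * (-GB)ᵀ) a b) t :=
    Matrix.hasDerivAt_mul_transpose_apply hB hB a b
  refine (hAA.fun_sub hBB).congr_deriv ?_
  have hGA : GA * (A t)ᵀ = (A t * GAᵀ)ᵀ := by
    rw [Matrix.transpose_mul, Matrix.transpose_transpose]
  have hGB : B t * GBᵀ = (GB * (B t)ᵀ)ᵀ := by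
    rw [Matrix.transpose_mul, Matrix.transpose_transpose]
  rw [Matrix.neg_mul, Matrix.neg_mul, Matrix.transpose_neg, Matrix.transpose_neg, Matrix.mul_neg,
    Matrix.mul_neg, hGA, hGB, hbal]
  simp only [Matrix.add_apply, Matrix.neg_apply, Matrix.transpose_apply]
  ring

theorem Matrix.hasDerivAt_transpose_mul_line_apply {m n : Type*} [Fintype m]
    (A B V W : Matrix m n ℝ) (p q : n) :
    HasDerivAt (fun s : ℝ => ((A + s • V)ᵀ * (B + s • W)) p q)
      ((Vᵀ * B + Aᵀ * W) p q) 0 := by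
  have hline : ∀ a b : ℝ, HasDerivAt (fun s : ℝ => a + s * b) b 0 := fun a b => by
    simpa using ((hasDerivAt_id (0 : ℝ)).mul_const b).const_add a
  simp only [Matrix.mul_apply, Matrix.transpose_apply, Matrix.add_apply, Matrix.smul_apply,
    smul_eq_mul, ← Finset.sum_add_distrib]
  exact HasDerivAt.fun_sum fun i _ => ((hline _ _).mul (hline _ _)).congr_deriv (by simp)

section Attention

variable {H d dim : ℕ}

abbrev HeadParams (H d dim : ℕ) : Type := EuclideanSpace ℝ (Fin H × Fin 4 × Fin d × Fin dim)

def leftSlot : Fin 2 → Fin 4 := ![0, 2]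

def rightSlot : Fin 2 → Fin 4 := ![1, 3]

theorem headReparam_apply (θ : HeadParams H d dim) (h : Fin H) (k : Fin 2) (p q : Fin dim) :
    headReparam H d dim θ (h, k, p, q) =
      ((headMatrix H d dim θ h (leftSlot k))ᵀ * headMatrix H d dim θ h (rightSlot k)) p q := by
  fin_cases k <;> rfl

theorem headMatrix_add_smul (θ v : HeadParams H d dim) (s : ℝ) (h : Fin H) (c : Fin 4) :
    headMatrix H d dim (θ + s • v) h c =
      headMatrix H d dim θ h c + s • headMatrix H d dim v h c :=
  rfl

theorem headMatrix_sub (u w : HeadParams H d dim) (h : Fin H) (c : Fin 4) :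
    headMatrix H d dim (u - w) h c = headMatrix H d dim u h c - headMatrix H d dim w h c :=
  rfl

theorem hasDerivAt_headMatrix_apply {θ : ℝ → HeadParams H d dim} {θ' : HeadParams H d dim}
    {t : ℝ} (hθ : HasDerivAt θ θ' t) (h : Fin H) (c : Fin 4) (i : Fin d) (j : Fin dim) :
    HasDerivAt (fun t => headMatrix H d dim (θ t) h c i j) (headMatrix H d dim θ' h c i j) t :=
  (EuclideanSpace.proj (𝕜 := ℝ) (h, c, i, j)).hasFDerivAt.comp_hasDerivAt t hθ

noncomputable def headVector (h : Fin H) (c : Fin 4) (Y : Matrix (Fin d) (Fin dim) ℝ) :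
    HeadParams H d dim :=
  (EuclideanSpace.equiv _ ℝ).symm fun p => if p.1 = h ∧ p.2.1 = c then Y p.2.2.1 p.2.2.2 else 0

theorem headMatrix_headVector (h h' : Fin H) (c c' : Fin 4) (Y : Matrix (Fin d) (Fin dim) ℝ) :
    headMatrix H d dim (headVector h c Y) h' c' = if h' = h ∧ c' = c then Y else 0 := by
  ext i j
  split_ifs <;> simp_all [headMatrix, headVector]

theorem inner_headVector (w : HeadParams H d dim) (h : Fin H) (c : Fin 4)
    (Y : Matrix (Fin d) (Fin dim) ℝ) :
    ⟪w, headVector h c Y⟫_ℝ = (Y * (headMatrix H d dim w h c)ᵀ).trace := by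
  simp [PiLp.inner_apply, headVector, headMatrix, Fintype.sum_prod_type, Matrix.trace,
    Matrix.mul_apply, ite_and]

/-- The velocity at `s = 0` of `(Q, K) ↦ (exp (s X) Q, exp (-s Xᵀ) K)` on the `k`-th factor pair
of head `h`. -/
noncomputable def headShear (θ : HeadParams H d dim) (h : Fin H) (k : Fin 2)
    (X : Matrix (Fin d) (Fin d) ℝ) : HeadParams H d dim :=
  headVector h (leftSlot k) (X * headMatrix H d dim θ h (leftSlot k)) -
    headVector h (rightSlot k) (Xᵀ * headMatrix H d dim θ h (rightSlot k))

theorem headShear_transpose_mul_add (θ : HeadParams H d dim) (h h' : Fin H) (k k' : Fin 2)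
    (X : Matrix (Fin d) (Fin d) ℝ) :
    (headMatrix H d dim (headShear θ h k X) h' (leftSlot k'))ᵀ *
        headMatrix H d dim θ h' (rightSlot k') +
      (headMatrix H d dim θ h' (leftSlot k'))ᵀ *
        headMatrix H d dim (headShear θ h k X) h' (rightSlot k') = 0 := by
  by_cases hh : h' = h
  · subst hh
    fin_cases k <;> fin_cases k' <;>
      simp [headShear, headMatrix_sub, headMatrix_headVector, leftSlot, rightSlot,
        Matrix.transpose_mul, Matrix.mul_assoc]
  · simp [headShear, headMatrix_sub, headMatrix_headVector, hh]

theorem hasDerivAt_headReparam_add_smul_headShear (θ : HeadParams H d dim) (h : Fin H)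
    (k : Fin 2) (X : Matrix (Fin d) (Fin d) ℝ) :
    HasDerivAt (fun s : ℝ => headReparam H d dim (θ + s • headShear θ h k X)) 0 0 := by
  have hcoord : ∀ p, HasDerivAt
      (fun s : ℝ => headReparam H d dim (θ + s • headShear θ h k X) p) 0 0 := by
    rintro ⟨h', k', p, q⟩
    simp only [headReparam_apply, headMatrix_add_smul]
    refine (Matrix.hasDerivAt_transpose_mul_line_apply _ _ _ _ p q).congr_deriv ?_
    rw [headShear_transpose_mul_add, Matrix.zero_apply]
  exact (EuclideanSpace.equiv _ ℝ).symm.hasFDerivAt.comp_hasDerivAt 0 (hasDerivAt_pi.2 hcoord)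

theorem headMatrix_mul_transpose_gradient_eq
    {G : EuclideanSpace ℝ (Fin H × Fin 2 × Fin dim × Fin dim) → ℝ} (hG : Differentiable ℝ G)
    (θ : HeadParams H d dim) (h : Fin H) (k : Fin 2) :
    headMatrix H d dim θ h (leftSlot k) *
        (headMatrix H d dim (gradient (G ∘ headReparam H d dim) θ) h (leftSlot k))ᵀ =
      headMatrix H d dim (gradient (G ∘ headReparam H d dim) θ) h (rightSlot k) *
        (headMatrix H d dim θ h (rightSlot k))ᵀ := by
  set A := headMatrix H d dim θ h (leftSlot k)
  set B := headMatrix H d dim θ h (rightSlot k)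
  set GA := headMatrix H d dim (gradient (G ∘ headReparam H d dim) θ) h (leftSlot k)
  set GB := headMatrix H d dim (gradient (G ∘ headReparam H d dim) θ) h (rightSlot k)
  rw [Matrix.ext_iff_trace_mul_left]
  intro X
  have h0 := fderiv_comp_apply_eq_zero_of_hasDerivAt_line_zero (hG _)
    (hasDerivAt_headReparam_add_smul_headShear θ h k X)
  rw [← inner_gradient_left, headShear, inner_sub_right, inner_headVector, inner_headVector,
    sub_eq_zero] at h0
  calc (X * (A * GAᵀ)).trace = (X * A * GAᵀ).trace := by rw [Matrix.mul_assoc]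
    _ = (Xᵀ * B * GBᵀ).trace := h0
    _ = (GB * Bᵀ * X).trace := by
        rw [← Matrix.trace_transpose]
        simp only [Matrix.transpose_mul, Matrix.transpose_transpose, Matrix.mul_assoc]
    _ = (X * (GB * Bᵀ)).trace := Matrix.trace_mul_comm _ _

noncomputable def headImbalance (θ : HeadParams H d dim) (h : Fin H) (k : Fin 2) :
    Matrix (Fin d) (Fin d) ℝ :=
  headMatrix H d dim θ h (leftSlot k) * (headMatrix H d dim θ h (leftSlot k))ᵀ -
    headMatrix H d dim θ h (rightSlot k) * (headMatrix H d dim θ h (rightSlot k))ᵀ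

theorem hasDerivAt_headImbalance_apply
    {G : EuclideanSpace ℝ (Fin H × Fin 2 × Fin dim × Fin dim) → ℝ} (hG : Differentiable ℝ G)
    {θ : ℝ → HeadParams H d dim} {t : ℝ}
    (hθ : HasDerivAt θ (-gradient (G ∘ headReparam H d dim) (θ t)) t)
    (h : Fin H) (k : Fin 2) (a b : Fin d) :
    HasDerivAt (fun t => headImbalance (θ t) h k a b) 0 t :=
  Matrix.hasDerivAt_mul_transpose_sub_apply (hasDerivAt_headMatrix_apply hθ h _)
    (hasDerivAt_headMatrix_apply hθ h _) (headMatrix_mul_transpose_gradient_eq hG (θ t) h k) a b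

end Attention

theorem multihead_attention_conservation_general
    (H d dim : ℕ)
    (G : EuclideanSpace ℝ (Fin H × Fin 2 × Fin dim × Fin dim) → ℝ)
    (hG : Differentiable ℝ G)
    (L : EuclideanSpace ℝ (Fin H × Fin 4 × Fin d × Fin dim) → ℝ)
    (hL : ∀ θ, L θ = G (headReparam H d dim θ))
    (I : Set ℝ) (hI : Convex ℝ I)
    (θ : ℝ → EuclideanSpace ℝ (Fin H × Fin 4 × Fin d × Fin dim))
    (hflow : ∀ t ∈ I, HasDerivAt θ (-(gradient L (θ t))) t) :
    ∀ h : Fin H, ∀ s ∈ I, ∀ t ∈ I,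
      (headMatrix H d dim (θ s) h 0 * (headMatrix H d dim (θ s) h 0)ᵀ -
          headMatrix H d dim (θ s) h 1 * (headMatrix H d dim (θ s) h 1)ᵀ =
        headMatrix H d dim (θ t) h 0 * (headMatrix H d dim (θ t) h 0)ᵀ -
          headMatrix H d dim (θ t) h 1 * (headMatrix H d dim (θ t) h 1)ᵀ) ∧
      (headMatrix H d dim (θ s) h 2 * (headMatrix H d dim (θ s) h 2)ᵀ -
          headMatrix H d dim (θ s) h 3 * (headMatrix H d dim (θ s) h 3)ᵀ =
        headMatrix H d dim (θ t) h 2 * (headMatrix H d dim (θ t) h 2)ᵀ -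
          headMatrix H d dim (θ t) h 3 * (headMatrix H d dim (θ t) h 3)ᵀ) := by
  obtain rfl : L = G ∘ headReparam H d dim := funext hL
  have hconst : ∀ h k, ∀ s ∈ I, ∀ t ∈ I,
      headImbalance (θ s) h k = headImbalance (θ t) h k :=
    fun h k s hs t ht => Matrix.ext fun a b => hI.eq_of_forall_hasDerivAt_zero
      (fun u hu => hasDerivAt_headImbalance_apply hG (hflow u hu) h k a b) hs ht
  exact fun h s hs t ht => ⟨hconst h 0 s hs t ht, hconst h 1 s hs t ht⟩

/-- For any loss `L(θ) = G((Q_hᵀK_h, V_hᵀO_h)_h)` that depends on the multi-head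
attention parameters only through the products `Q_hᵀK_h` and `V_hᵀO_h` (with `G`
differentiable), the matrices `Q_h Q_hᵀ − K_h K_hᵀ` and `V_h V_hᵀ − O_h O_hᵀ` are
constant along any gradient-flow trajectory `θ'(t) = −∇L(θ(t))` of `L`. -/
theorem multihead_attention_conservation
    (H d dim : ℕ) (hH : 1 ≤ H) (hd : 1 ≤ d) (hdim : 1 ≤ dim)
    (G : EuclideanSpace ℝ (Fin H × Fin 2 × Fin dim × Fin dim) → ℝ)
    (hG : Differentiable ℝ G)
    (L : EuclideanSpace ℝ (Fin H × Fin 4 × Fin d × Fin dim) → ℝ)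
    (hL : ∀ θ, L θ = G (headReparam H d dim θ))
    (I : Set ℝ) (hI : Convex ℝ I)
    (θ : ℝ → EuclideanSpace ℝ (Fin H × Fin 4 × Fin d × Fin dim))
    (hflow : ∀ t ∈ I, HasDerivAt θ (-(gradient L (θ t))) t) :
    ∀ h : Fin H, ∀ s ∈ I, ∀ t ∈ I,
      (headMatrix H d dim (θ s) h 0 * (headMatrix H d dim (θ s) h 0)ᵀ -
          headMatrix H d dim (θ s) h 1 * (headMatrix H d dim (θ s) h 1)ᵀ =
        headMatrix H d dim (θ t) h 0 * (headMatrix H d dim (θ t) h 0)ᵀ -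
          headMatrix H d dim (θ t) h 1 * (headMatrix H d dim (θ t) h 1)ᵀ) ∧
      (headMatrix H d dim (θ s) h 2 * (headMatrix H d dim (θ s) h 2)ᵀ -
          headMatrix H d dim (θ s) h 3 * (headMatrix H d dim (θ s) h 3)ᵀ =
        headMatrix H d dim (θ t) h 2 * (headMatrix H d dim (θ t) h 2)ᵀ -
          headMatrix H d dim (θ t) h 3 * (headMatrix H d dim (θ t) h 3)ᵀ) :=
  multihead_attention_conservation_general H d dim G hG L hL I hI θ hflow
end

section
/- Let n ≥ 1, m ≥ 1, N ≥ 1, fix data points x₁, …, x_N ∈ ℝ^m and labels y₁, …, y_N in a set Y, and let ℓ : ℝⁿ × Y → ℝ be such that z ↦ ℓ(z, y) is differentiable for each y ∈ Y. Define L : ℝ^{n×m} → ℝ by L(θ) = (1/N) Σ_{i=1}^N ℓ(softmax(θ xᵢ), yᵢ). Then along any gradient-flow trajectory θ(t) of L, each column sum h_j(θ) = Σ_{i=1}^n θ_{i,j}, for j = 1, …, m, is constant in t. -/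
/-!
The loss depends on `θ` only through the softmax outputs, and softmax is invariant under adding
the same constant to all logits. Shifting column `j` of `θ` by `c` adds `c * xᵢ j` to every logit
of sample `i`, so `L` is invariant under translation along the all-ones column vector `v_j`.
Hence `∇L ⟂ v_j` everywhere, and `⟪v_j, θ t⟫ = ∑ᵢ θ t (i, j)` has zero derivative along the flow.
-/

open Real
open scoped RealInnerProductSpace

noncomputable section

def softmax {ι : Type*} [Fintype ι] (z : ι → ℝ) : ι → ℝ :=
  fun a => exp (z a) / ∑ c, exp (z c)

theorem softmax_add_const {ι : Type*} [Fintype ι] (z : ι → ℝ) (c : ℝ) :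
    softmax (fun a => z a + c) = softmax z := by
  funext a
  simp only [softmax, exp_add, ← Finset.sum_mul]
  exact mul_div_mul_right _ _ (exp_ne_zero c)

section Conservation

variable {E : Type*} [NormedAddCommGroup E] [InnerProductSpace ℝ E]

theorem fderiv_apply_eq_zero_of_forall_add_smul {f : E → ℝ} {v : E}
    (hf : ∀ p (c : ℝ), f (p + c • v) = f p) (p : E) : fderiv ℝ f p v = 0 := by
  by_cases hdiff : DifferentiableAt ℝ f p
  · rw [← hdiff.lineDeriv_eq_fderiv, lineDeriv]
    simp only [hf, deriv_const]
  · rw [fderiv_zero_of_not_differentiableAt hdiff, zero_apply]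

theorem inner_eq_of_gradient_flow_of_forall_add_smul [CompleteSpace E] {f : E → ℝ} {v : E}
    (hf : ∀ p (c : ℝ), f (p + c • v) = f p) {I : Set ℝ} (hI : Convex ℝ I) {θ : ℝ → E}
    (hflow : ∀ t ∈ I, HasDerivAt θ (-(gradient f (θ t))) t) {s t : ℝ}
    (hs : s ∈ I) (ht : t ∈ I) :
    ⟪v, θ s⟫ = ⟪v, θ t⟫ := by
  have hderiv : ∀ u ∈ I, HasDerivWithinAt (fun t => ⟪v, θ t⟫) 0 I u := by
    intro u hu
    have h := ((innerSL ℝ v).hasFDerivAt.comp_hasDerivAt u (hflow u hu)).hasDerivWithinAt (s := I)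
    rwa [innerSL_apply_apply, inner_neg_right, inner_gradient_right,
      fderiv_apply_eq_zero_of_forall_add_smul hf, map_zero, neg_zero] at h
  have h := hI.norm_image_sub_le_of_norm_hasDerivWithin_le hderiv (C := 0) (by simp) hs ht
  rw [zero_mul, norm_le_zero_iff, sub_eq_zero] at h
  exact h.symm

end Conservation

section Columns

variable {ι κ : Type*} [Fintype κ] [DecidableEq κ]

def columnOnes (j : κ) : EuclideanSpace ℝ (ι × κ) :=
  WithLp.toLp 2 fun p => if p.2 = j then 1 else 0

theorem inner_columnOnes [Fintype ι] (j : κ) (θ : EuclideanSpace ℝ (ι × κ)) :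
    ⟪columnOnes j, θ⟫ = ∑ i, θ (i, j) := by
  simp [PiLp.inner_apply, columnOnes, Fintype.sum_prod_type]

theorem sum_add_smul_columnOnes_mul (θ : EuclideanSpace ℝ (ι × κ)) (j : κ) (c : ℝ)
    (x : κ → ℝ) (a : ι) :
    ∑ b, (θ + c • columnOnes j : EuclideanSpace ℝ (ι × κ)) (a, b) * x b =
      ∑ b, θ (a, b) * x b + c * x j := by
  simp [columnOnes, add_mul, Finset.sum_add_distrib]

end Columns

end

theorem softmax_layer_column_sums_conserved_general
    (n m N : ℕ)
    (Y : Type*) (x : Fin N → Fin m → ℝ) (y : Fin N → Y)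
    (ℓ : (Fin n → ℝ) → Y → ℝ)
    (L : EuclideanSpace ℝ (Fin n × Fin m) → ℝ)
    (hL : ∀ θ, L θ = (1 / (N : ℝ)) * ∑ i : Fin N,
      ℓ (fun a => Real.exp (∑ b, θ (a, b) * x i b) /
          ∑ c, Real.exp (∑ b, θ (c, b) * x i b)) (y i))
    (I : Set ℝ) (hI : Convex ℝ I)
    (θ : ℝ → EuclideanSpace ℝ (Fin n × Fin m))
    (hflow : ∀ t ∈ I, HasDerivAt θ (-(gradient L (θ t))) t) :
    ∀ j : Fin m, ∀ s ∈ I, ∀ t ∈ I, ∑ i, θ s (i, j) = ∑ i, θ t (i, j) := by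
  intro j s hs t ht
  have hinv : ∀ p (c : ℝ), L (p + c • columnOnes j) = L p := by
    intro p c
    simp only [hL, sum_add_smul_columnOnes_mul]
    congr! 3 with i
    exact softmax_add_const (fun a => ∑ b, p (a, b) * x i b) (c * x i j)
  rw [← inner_columnOnes, ← inner_columnOnes]
  exact inner_eq_of_gradient_flow_of_forall_add_smul hinv hI hflow hs ht

/-- Along any gradient-flow trajectory of the empirical loss
`L(θ) = (1/N) ∑ᵢ ℓ(softmax(θ xᵢ), yᵢ)` of a softmax classification layer, each column
sum `h_j(θ) = ∑ᵢ θ_{i,j}` of the parameter matrix is constant in time. -/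
theorem softmax_layer_column_sums_conserved
    (n m N : ℕ) (hn : 1 ≤ n) (hm : 1 ≤ m) (hN : 1 ≤ N)
    (Y : Type*) (x : Fin N → Fin m → ℝ) (y : Fin N → Y)
    (ℓ : (Fin n → ℝ) → Y → ℝ) (hℓ : ∀ yy : Y, Differentiable ℝ (fun z => ℓ z yy))
    (L : EuclideanSpace ℝ (Fin n × Fin m) → ℝ)
    (hL : ∀ θ, L θ = (1 / (N : ℝ)) * ∑ i : Fin N,
      ℓ (fun a => Real.exp (∑ b, θ (a, b) * x i b) /
          ∑ c, Real.exp (∑ b, θ (c, b) * x i b)) (y i))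
    (I : Set ℝ) (hI : Convex ℝ I)
    (θ : ℝ → EuclideanSpace ℝ (Fin n × Fin m))
    (hflow : ∀ t ∈ I, HasDerivAt θ (-(gradient L (θ t))) t) :
    ∀ j : Fin m, ∀ s ∈ I, ∀ t ∈ I, ∑ i, θ s (i, j) = ∑ i, θ t (i, j) :=
  softmax_layer_column_sums_conserved_general n m N Y x y ℓ L hL I hI θ hflow
end

section
/- Let Ω ⊆ ℝ^D be open, let L : Ω → ℝ be differentiable, and let T : ℝ × Ω → Ω be a one-parameter transformation such that T(0, θ) = θ for all θ, ε ↦ T(ε, θ) is differentiable at ε = 0 for each θ, and L(T(ε, θ)) = L(θ) for all ε ∈ ℝ and θ ∈ Ω (T leaves L invariant). Let h : Ω → ℝ be differentiable with ∇h(θ) = ∂_ε T(ε, θ)|_{ε=0} for all θ ∈ Ω. Then along any gradient-flow trajectory θ(t) of L, h(θ(t)) is constant. -/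
/-!
Differentiating `ε ↦ L (T ε θ)` at `ε = 0` shows that `∇L θ` is orthogonal to the generator
`∇h θ` of the invariance. Along a gradient flow `(h ∘ θ)' = -⟪∇h, ∇L⟫ = 0`, so `h ∘ θ` is
constant on the (convex) time interval by the mean value inequality.
-/

open InnerProductSpace

theorem HasFDerivAt.apply_eq_zero_of_comp_eq_const {E F : Type*} [NormedAddCommGroup E]
    [NormedSpace ℝ E] [NormedAddCommGroup F] [NormedSpace ℝ F] {f : E → F} {f' : E →L[ℝ] F}
    {γ : ℝ → E} {v : E}
    (hf : HasFDerivAt f f' (γ 0)) (hγ : HasDerivAt γ v 0) (hconst : ∀ ε, f (γ ε) = f (γ 0)) :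
    f' v = 0 := by
  have hcomp : HasDerivAt (fun ε => f (γ ε)) (f' v) 0 := hf.comp_hasDerivAt 0 hγ
  have hzero : HasDerivAt (fun ε => f (γ ε)) 0 0 := by
    simpa only [hconst] using hasDerivAt_const (0 : ℝ) (f (γ 0))
  exact hcomp.unique hzero

section

variable {E : Type*} [NormedAddCommGroup E] [InnerProductSpace ℝ E] [CompleteSpace E]

theorem inner_gradient_eq_zero_of_comp_eq_const {f : E → ℝ} {x v : E} {γ : ℝ → E}
    (hf : DifferentiableAt ℝ f x) (hγ0 : γ 0 = x) (hγ : HasDerivAt γ v 0)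
    (hconst : ∀ ε, f (γ ε) = f x) : ⟪gradient f x, v⟫_ℝ = 0 := by
  subst hγ0
  rw [← toDual_apply_apply]
  exact hf.hasGradientAt.hasFDerivAt.apply_eq_zero_of_comp_eq_const hγ hconst

theorem hasDerivAt_comp_of_gradient_flow {f L : E → ℝ} {θ : ℝ → E} {t : ℝ}
    (hf : DifferentiableAt ℝ f (θ t)) (hθ : HasDerivAt θ (-gradient L (θ t)) t) :
    HasDerivAt (fun t => f (θ t)) (-⟪gradient f (θ t), gradient L (θ t)⟫_ℝ) t := by
  have := hf.hasGradientAt.hasFDerivAt.comp_hasDerivAt t hθ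
  rwa [map_neg, toDual_apply_apply] at this

theorem Convex.eq_of_gradient_flow_of_inner_gradient_eq_zero {f L : E → ℝ} {I : Set ℝ}
    (hI : Convex ℝ I) {θ : ℝ → E} (hθ : ∀ t ∈ I, HasDerivAt θ (-gradient L (θ t)) t)
    (hf : ∀ t ∈ I, DifferentiableAt ℝ f (θ t))
    (horth : ∀ t ∈ I, ⟪gradient L (θ t), gradient f (θ t)⟫_ℝ = 0) {s t : ℝ} (hs : s ∈ I)
    (ht : t ∈ I) : f (θ s) = f (θ t) := by
  have hderiv : ∀ τ ∈ I, HasDerivWithinAt (fun τ => f (θ τ)) 0 I τ := fun τ hτ => by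
    have := hasDerivAt_comp_of_gradient_flow (hf τ hτ) (hθ τ hτ)
    rw [real_inner_comm, horth τ hτ, neg_zero] at this
    exact this.hasDerivWithinAt
  have hbound := hI.norm_image_sub_le_of_norm_hasDerivWithin_le (C := 0) hderiv
    (fun _ _ => norm_zero.le) ht hs
  rw [zero_mul, norm_le_zero_iff, sub_eq_zero] at hbound
  exact hbound

end

theorem invariance_gives_conservation_law_general
    (D : ℕ) (Ω : Set (EuclideanSpace ℝ (Fin D))) (hΩ : IsOpen Ω)
    (L : EuclideanSpace ℝ (Fin D) → ℝ) (hL : DifferentiableOn ℝ L Ω)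
    (T : ℝ → EuclideanSpace ℝ (Fin D) → EuclideanSpace ℝ (Fin D))
    (hT0 : ∀ θ ∈ Ω, T 0 θ = θ)
    (hTinv : ∀ (ε : ℝ), ∀ θ ∈ Ω, L (T ε θ) = L θ)
    (h : EuclideanSpace ℝ (Fin D) → ℝ) (hdiff : DifferentiableOn ℝ h Ω)
    (hgen : ∀ θ ∈ Ω, HasDerivAt (fun ε => T ε θ) (gradient h θ) 0)
    (I : Set ℝ) (hI : Convex ℝ I)
    (θc : ℝ → EuclideanSpace ℝ (Fin D))
    (hmem : ∀ t ∈ I, θc t ∈ Ω)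
    (hflow : ∀ t ∈ I, HasDerivAt θc (-(gradient L (θc t))) t) :
    ∀ s ∈ I, ∀ t ∈ I, h (θc s) = h (θc t) := by
  have hL' : ∀ θ ∈ Ω, DifferentiableAt ℝ L θ := fun θ hθ => hL.differentiableAt (hΩ.mem_nhds hθ)
  have hh' : ∀ θ ∈ Ω, DifferentiableAt ℝ h θ := fun θ hθ =>
    hdiff.differentiableAt (hΩ.mem_nhds hθ)
  have horth : ∀ θ ∈ Ω, ⟪gradient L θ, gradient h θ⟫_ℝ = 0 := fun θ hθ =>
    inner_gradient_eq_zero_of_comp_eq_const (hL' θ hθ) (hT0 θ hθ) (hgen θ hθ)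
      (fun ε => hTinv ε θ hθ)
  intro s hs t ht
  exact hI.eq_of_gradient_flow_of_inner_gradient_eq_zero hflow (fun τ hτ => hh' _ (hmem τ hτ))
    (fun τ hτ => horth _ (hmem τ hτ)) hs ht

/-- A conservation law obtained via an invariance: if `T` is a one-parameter
transformation of the open set `Ω` with `T(0, θ) = θ` that leaves `L` invariant, and if
`h` is differentiable with `∇h(θ)` equal to the infinitesimal generator
`∂_ε T(ε, θ)|_{ε=0}` of `T`, then `h` is constant along any gradient-flow trajectory
`θ'(t) = −∇L(θ(t))` of `L` staying in `Ω`. -/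
theorem invariance_gives_conservation_law
    (D : ℕ) (Ω : Set (EuclideanSpace ℝ (Fin D))) (hΩ : IsOpen Ω)
    (L : EuclideanSpace ℝ (Fin D) → ℝ) (hL : DifferentiableOn ℝ L Ω)
    (T : ℝ → EuclideanSpace ℝ (Fin D) → EuclideanSpace ℝ (Fin D))
    (hTmaps : ∀ (ε : ℝ), ∀ θ ∈ Ω, T ε θ ∈ Ω)
    (hT0 : ∀ θ ∈ Ω, T 0 θ = θ)
    (hTinv : ∀ (ε : ℝ), ∀ θ ∈ Ω, L (T ε θ) = L θ)
    (h : EuclideanSpace ℝ (Fin D) → ℝ) (hdiff : DifferentiableOn ℝ h Ω)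
    (hgen : ∀ θ ∈ Ω, HasDerivAt (fun ε => T ε θ) (gradient h θ) 0)
    (I : Set ℝ) (hI : Convex ℝ I)
    (θc : ℝ → EuclideanSpace ℝ (Fin D))
    (hmem : ∀ t ∈ I, θc t ∈ Ω)
    (hflow : ∀ t ∈ I, HasDerivAt θc (-(gradient L (θc t))) t) :
    ∀ s ∈ I, ∀ t ∈ I, h (θc s) = h (θc t) :=
  invariance_gives_conservation_law_general D Ω hΩ L hL T hT0 hTinv h hdiff hgen I hI θc hmem hflow
end

section
/- Let ℓ : ℝ → ℝ be differentiable and define L(u, v) = ℓ(u v) on ℝ². Let sign : ℝ → ℝ denote the sign function with sign(0) = 0. Let t ↦ (u(t), v(t)) be a differentiable curve on an interval I with u(t) ≠ 0 and v(t) ≠ 0 for all t ∈ I, solving the sign-gradient (Adam) flow u'(t) = −sign(∂_u L(u(t), v(t))) = −sign(ℓ'(u(t)v(t)) v(t)) and v'(t) = −sign(∂_v L(u(t), v(t))) = −sign(ℓ'(u(t)v(t)) u(t)). Then |u(t)| − |v(t)| is constant on I; i.e., (u, v) ↦ |u| − |v| is a conservation law of the Adam flow for the scalar two-layer linear model. 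-/
/-!
The chain rule gives `d/dt |u| = sign u · u'`, and `sign` is multiplicative, so along the flow
`d/dt |u| = -sign u · sign ℓ'(uv) · sign v = d/dt |v|`. Hence `|u| - |v|` has derivative zero
on the convex set `I`, and the mean value inequality makes it constant there.
-/

theorem Real.sign_eq_coe_sign (x : ℝ) : Real.sign x = (SignType.sign x : ℝ) := by
  rcases lt_trichotomy x 0 with hx | rfl | hx
  · simp [Real.sign_of_neg hx, _root_.sign_neg hx]
  · simp
  · simp [Real.sign_of_pos hx, sign_pos hx]

theorem Real.sign_mul (x y : ℝ) : Real.sign (x * y) = Real.sign x * Real.sign y := by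
  simp only [Real.sign_eq_coe_sign, _root_.sign_mul, SignType.coe_mul]

theorem Convex.eq_of_hasDerivWithinAt_zero {𝕜 G : Type*} [RCLike 𝕜] [NormedAddCommGroup G]
    [NormedSpace 𝕜 G] {f : 𝕜 → G} {s : Set 𝕜} (hs : Convex ℝ s)
    (hf : ∀ x ∈ s, HasDerivWithinAt f 0 s x) {x y : 𝕜} (hx : x ∈ s) (hy : y ∈ s) :
    f x = f y := by
  have := hs.norm_image_sub_le_of_norm_hasDerivWithin_le (C := 0) hf (fun _ _ => by simp) hx hy
  simpa [sub_eq_zero, eq_comm] using this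

theorem hasDerivAt_abs_sub_abs_of_signFlow {u v : ℝ → ℝ} {t c : ℝ} (hut : u t ≠ 0)
    (hvt : v t ≠ 0) (hu : HasDerivAt u (-Real.sign (c * v t)) t)
    (hv : HasDerivAt v (-Real.sign (c * u t)) t) :
    HasDerivAt (fun t => |u t| - |v t|) 0 t := by
  have hzero : (SignType.sign (u t) : ℝ) * -Real.sign (c * v t)
      - (SignType.sign (v t) : ℝ) * -Real.sign (c * u t) = 0 := by
    simp only [← Real.sign_eq_coe_sign, Real.sign_mul]
    ring
  have habs := ((hasDerivAt_abs hut).comp t hu).sub ((hasDerivAt_abs hvt).comp t hv)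
  rw [hzero] at habs
  exact habs

theorem adam_flow_scalar_conservation_general
    (ℓ : ℝ → ℝ)
    (I : Set ℝ) (hI : Convex ℝ I)
    (u v : ℝ → ℝ)
    (hu0 : ∀ t ∈ I, u t ≠ 0) (hv0 : ∀ t ∈ I, v t ≠ 0)
    (hu : ∀ t ∈ I, HasDerivAt u (-Real.sign (deriv ℓ (u t * v t) * v t)) t)
    (hv : ∀ t ∈ I, HasDerivAt v (-Real.sign (deriv ℓ (u t * v t) * u t)) t) :
    ∀ s ∈ I, ∀ t ∈ I, |u s| - |v s| = |u t| - |v t| := fun _ hs _ ht =>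
  hI.eq_of_hasDerivWithinAt_zero (f := fun t => |u t| - |v t|)
    (fun t htI => (hasDerivAt_abs_sub_abs_of_signFlow (hu0 t htI) (hv0 t htI) (hu t htI)
      (hv t htI)).hasDerivWithinAt) hs ht

/-- `(u, v) ↦ |u| − |v|` is a conservation law of the sign-gradient (Adam) flow for the
scalar two-layer linear model `L(u, v) = ℓ(u v)`: along any differentiable solution of
`u' = −sign(ℓ'(uv) v)`, `v' = −sign(ℓ'(uv) u)` with `u, v` never vanishing,
`|u(t)| − |v(t)|` is constant. Here `sign(0) = 0`. -/
theorem adam_flow_scalar_conservation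
    (ℓ : ℝ → ℝ) (hℓ : Differentiable ℝ ℓ)
    (I : Set ℝ) (hI : Convex ℝ I)
    (u v : ℝ → ℝ)
    (hu0 : ∀ t ∈ I, u t ≠ 0) (hv0 : ∀ t ∈ I, v t ≠ 0)
    (hu : ∀ t ∈ I, HasDerivAt u (-Real.sign (deriv ℓ (u t * v t) * v t)) t)
    (hv : ∀ t ∈ I, HasDerivAt v (-Real.sign (deriv ℓ (u t * v t) * u t)) t) :
    ∀ s ∈ I, ∀ t ∈ I, |u s| - |v s| = |u t| - |v t| :=
  adam_flow_scalar_conservation_general ℓ I hI u v hu0 hv0 hu hv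
end
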